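/- arXiv:2103.13975 — 3 statements merged into one kernel-verified Lean document; each statement's English description precedes it below -/
import Mathlib

section
/- Let X be a smooth projective curve over a field K admitting two distinct commuting involutions v and w. Suppose Q is a point of X defined over a degree 4 extension of K whose image in the quotient X/⟨v,w⟩ is defined over a quadratic extension of K. Then the image of Q in at least one of the three quotient curves X/v, X/w, X/vw is defined over a quadratic extension of K. -/
/-!
The image of `Q` in a quotient is `f Q` for a `G`-equivariant `f`, so its orbit has size
`[G : Stab (f Q)]`, a divisor of `[G : Stab Q] = 4`. As the bottom image has orbit of size at
most `2 < 4`, some `g` fixes the set `{Q, v Q, w Q, v (w Q)}` but moves `Q`, hence `g • Q = u Q`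
for one of `u = v, w, v ∘ w`. Then `g` swaps `Q` and `u Q`, so it stabilises `{Q, u Q}` without
fixing `Q`: the orbit of `{Q, u Q}` has size a proper divisor of `4`, hence at most `2`.
-/

open Pointwise MulAction

theorem Function.Involutive.comp_of_commute {α : Type*} {f g : α → α} (hf : Function.Involutive f)
    (hg : Function.Involutive g) (hfg : Function.Commute f g) : Function.Involutive (f ∘ g) := by
  intro x
  simp only [Function.comp_apply]
  rw [← hfg (g x), hg x, hf x]

namespace MulAction

variable {G α β : Type*} [Group G] [MulAction G α] [MulAction G β]

theorem stabilizer_le_stabilizer_apply {f : α → β} (hf : ∀ (g : G) (x : α), f (g • x) = g • f x)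
    (x : α) : stabilizer G x ≤ stabilizer G (f x) := fun g hg => by
  rw [mem_stabilizer_iff] at hg ⊢
  rw [← hf, hg]

theorem card_orbit_dvd_card_orbit {x : α} {y : β} (hxy : stabilizer G x ≤ stabilizer G y) :
    Nat.card (orbit G y) ∣ Nat.card (orbit G x) := by
  simpa only [Nat.card_coe_set_eq, ← index_stabilizer] using Subgroup.index_dvd_of_le hxy

theorem card_orbit_lt_card_orbit_iff {x : α} {y : β} [Finite (orbit G x)]
    (hxy : stabilizer G x ≤ stabilizer G y) :
    Nat.card (orbit G y) < Nat.card (orbit G x) ↔ stabilizer G x < stabilizer G y := by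
  simp only [Nat.card_coe_set_eq, ← index_stabilizer]
  refine ⟨fun h => lt_of_le_of_ne hxy fun heq => h.ne (by rw [heq]), fun h => ?_⟩
  have : Finite (G ⧸ stabilizer G x) := .of_equiv _ (orbitEquivQuotientStabilizer G x)
  have : (stabilizer G x).FiniteIndex := Subgroup.finiteIndex_of_finite_quotient
  exact Subgroup.index_strictAnti h

end MulAction

section Involution

variable {G X : Type*} [Group G] [MulAction G X] {u : X → X}

theorem smul_pair_of_smul_comm (huG : ∀ (g : G) (x : X), u (g • x) = g • u x) (g : G) (x : X) :
    ({g • x, u (g • x)} : Set X) = g • ({x, u x} : Set X) := by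
  rw [Set.smul_set_insert, Set.smul_set_singleton, huG]

theorem card_orbit_pair_le_two (hu : Function.Involutive u)
    (huG : ∀ (g : G) (x : X), u (g • x) = g • u x) {Q : X}
    (hQ : Nat.card (orbit G Q) = 4) {g : G} (hgu : g • Q = u Q) (hgQ : g • Q ≠ Q) :
    Nat.card (orbit G ({Q, u Q} : Set X)) ≤ 2 := by
  have : Finite (orbit G Q) := Nat.finite_of_card_ne_zero (by omega)
  have hle := stabilizer_le_stabilizer_apply (G := G) (f := fun x => ({x, u x} : Set X))
    (smul_pair_of_smul_comm huG) Q
  have hg : g ∈ stabilizer G ({Q, u Q} : Set X) := by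
    rw [mem_stabilizer_iff, ← smul_pair_of_smul_comm huG, hgu, hu Q, Set.pair_comm]
  have hlt := (card_orbit_lt_card_orbit_iff hle).2
    (SetLike.lt_iff_le_and_exists.2 ⟨hle, g, hg, hgQ⟩)
  have hdvd := card_orbit_dvd_card_orbit hle
  rw [hQ] at hlt hdvd
  interval_cases Nat.card (orbit G ({Q, u Q} : Set X)) <;> omega

end Involution

theorem stmt0_general {G X : Type*} [Group G] [MulAction G X]
    (v w : X → X)
    (hv : Function.Involutive v) (hw : Function.Involutive w)
    (hvw : Function.Commute v w)
    (hvG : ∀ (g : G) (x : X), v (g • x) = g • v x)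
    (hwG : ∀ (g : G) (x : X), w (g • x) = g • w x)
    (Q : X)
    -- `Q` is defined over a degree 4 extension of `K`:
    (hQ : Nat.card (MulAction.orbit G Q) = 4)
    -- the image of `Q` in `X/⟨v,w⟩` is defined over a quadratic extension of `K`:
    (hbot : Nat.card (MulAction.orbit G ({Q, v Q, w Q, v (w Q)} : Set X)) ≤ 2) :
    -- the image of `Q` in one of `X/v`, `X/w`, `X/vw` is defined over a
    -- quadratic extension of `K`:
    Nat.card (MulAction.orbit G ({Q, v Q} : Set X)) ≤ 2 ∨
      Nat.card (MulAction.orbit G ({Q, w Q} : Set X)) ≤ 2 ∨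
      Nat.card (MulAction.orbit G ({Q, v (w Q)} : Set X)) ≤ 2 := by
  have : Finite (orbit G Q) := Nat.finite_of_card_ne_zero (by omega)
  have hvwG (g : G) (x : X) : (v ∘ w) (g • x) = g • (v ∘ w) x := by
    simp only [Function.comp_apply, hwG, hvG]
  have hle := stabilizer_le_stabilizer_apply (G := G)
    (f := fun x => ({x, v x, w x, v (w x)} : Set X)) (fun g x => by
      simp only [Set.smul_set_insert, Set.smul_set_singleton, hvG, hwG]) Q
  obtain ⟨-, g, hg, hgQ⟩ :=
    SetLike.lt_iff_le_and_exists.1 ((card_orbit_lt_card_orbit_iff hle).1 (by omega))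
  have hmem : g • Q ∈ ({Q, v Q, w Q, v (w Q)} : Set X) :=
    (mem_stabilizer_iff.1 hg) ▸ Set.smul_mem_smul_set (Set.mem_insert Q _)
  rcases hmem with h | h | h | h
  · exact absurd h hgQ
  · exact .inl (card_orbit_pair_le_two hv hvG hQ h hgQ)
  · exact .inr (.inl (card_orbit_pair_le_two hw hwG hQ h hgQ))
  · exact .inr (.inr (card_orbit_pair_le_two (hv.comp_of_commute hw hvw) hvwG hQ h hgQ))

theorem stmt0 {G X : Type*} [Group G] [MulAction G X]
    (v w : X → X)
    (hv : Function.Involutive v) (hw : Function.Involutive w)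
    (hvw : Function.Commute v w) (hne : v ≠ w)
    (hvG : ∀ (g : G) (x : X), v (g • x) = g • v x)
    (hwG : ∀ (g : G) (x : X), w (g • x) = g • w x)
    (Q : X)
    -- `Q` is defined over a degree 4 extension of `K`:
    (hQ : Nat.card (MulAction.orbit G Q) = 4)
    -- the image of `Q` in `X/⟨v,w⟩` is defined over a quadratic extension of `K`:
    (hbot : Nat.card (MulAction.orbit G ({Q, v Q, w Q, v (w Q)} : Set X)) ≤ 2) :
    -- the image of `Q` in one of `X/v`, `X/w`, `X/vw` is defined over a
    -- quadratic extension of `K`: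
    Nat.card (MulAction.orbit G ({Q, v Q} : Set X)) ≤ 2 ∨
      Nat.card (MulAction.orbit G ({Q, w Q} : Set X)) ≤ 2 ∨
      Nat.card (MulAction.orbit G ({Q, v (w Q)} : Set X)) ≤ 2 :=
  stmt0_general v w hv hw hvw hvG hwG Q hQ hbot
end

section
/- Let ρ : X → C be a degree d morphism of smooth projective curves over a field K, and let D₀ be a K-rational effective divisor of degree e on C. If the Riemann–Roch space L(ρ*D₀) on X equals the pullback ρ*L(D₀) of the Riemann–Roch space on C, then every effective K-rational divisor D of degree de on X with [D − ρ*D₀] = 0 in J(X)(K) is of the form ρ*D' for some effective K-rational divisor D' of degree e on C. -/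
/-!
Write `D = ρ*D₀ + div f`. Then `f ∈ L(ρ*D₀) = ρ* L(D₀)`, so `f = ρ*u` for a nonzero
`u ∈ L(D₀)`, and `D' := D₀ + div u` is effective of degree `e` (principal divisors
have degree `0`) with `ρ*D' = ρ*D₀ + div(ρ*u) = D`.
-/

theorem RingHom.exists_units_map_eq_of_mem_image {R S : Type*} [Semiring R] [Semiring S]
    [Nontrivial S] (φ : R →+* S) (P : Rˣ → Prop) (f : Sˣ)
    (hf : (f : S) ∈ φ '' {h : R | h = 0 ∨ ∃ u : Rˣ, (u : R) = h ∧ P u}) :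
    ∃ u : Rˣ, Units.map φ.toMonoidHom u = f ∧ P u := by
  obtain ⟨h, hh | ⟨u, rfl, hu⟩, hφ⟩ := hf
  · subst hh
    exact absurd (map_zero φ ▸ hφ).symm f.ne_zero
  · exact ⟨u, Units.ext hφ, hu⟩

theorem stmt5_general {Xpt Cpt FX FC : Type*} [Field FX] [Field FC]
    (divX : FXˣ → (Xpt →₀ ℤ)) (divC : FCˣ → (Cpt →₀ ℤ))
    (hdivC : ∀ f : FCˣ, (divC f).sum (fun _ n => n) = 0)
    (ρfun : FC →+* FX)
    (ρdiv : (Cpt →₀ ℤ) →+ (Xpt →₀ ℤ))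
    (hcompat : ∀ f : FCˣ, divX (Units.map ρfun.toMonoidHom f) = ρdiv (divC f))
    (e : ℕ)
    (D₀ : Cpt →₀ ℤ)
    (hD₀deg : D₀.sum (fun _ n => n) = (e : ℤ))
    -- the hypothesis `L(ρ*D₀) = ρ* L(D₀)`:
    (hRR : {h : FX | h = 0 ∨ ∃ u : FXˣ, (u : FX) = h ∧ ∀ pt, 0 ≤ (divX u + ρdiv D₀) pt}
         = ρfun '' {h : FC | h = 0 ∨ ∃ u : FCˣ, (u : FC) = h ∧ ∀ pt, 0 ≤ (divC u + D₀) pt})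
    (D : Xpt →₀ ℤ) (hDeff : ∀ pt, 0 ≤ D pt)
    (hclass : ∃ f : FXˣ, D - ρdiv D₀ = divX f) :
    ∃ D' : Cpt →₀ ℤ, (∀ pt, 0 ≤ D' pt) ∧ D'.sum (fun _ n => n) = (e : ℤ) ∧
      D = ρdiv D' := by
  obtain ⟨f, hf⟩ := hclass
  have hD : divX f + ρdiv D₀ = D := by rw [← hf, sub_add_cancel]
  have hfL : (f : FX) ∈ {h : FX | h = 0 ∨ ∃ u : FXˣ, (u : FX) = h ∧
      ∀ pt, 0 ≤ (divX u + ρdiv D₀) pt} :=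
    Or.inr ⟨f, rfl, hD ▸ hDeff⟩
  rw [hRR] at hfL
  obtain ⟨u, rfl, hu⟩ := ρfun.exists_units_map_eq_of_mem_image _ f hfL
  refine ⟨divC u + D₀, hu, ?_, ?_⟩
  · rw [Finsupp.sum_add_index' (fun _ => rfl) (fun _ _ _ => rfl), hdivC, hD₀deg, zero_add]
  · rw [← hD, hcompat, map_add]

theorem stmt5 {Xpt Cpt FX FC : Type*} [Field FX] [Field FC]
    (divX : FXˣ → (Xpt →₀ ℤ)) (divC : FCˣ → (Cpt →₀ ℤ))
    (hdivC : ∀ f : FCˣ, (divC f).sum (fun _ n => n) = 0)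
    (ρfun : FC →+* FX)
    (ρdiv : (Cpt →₀ ℤ) →+ (Xpt →₀ ℤ))
    (hcompat : ∀ f : FCˣ, divX (Units.map ρfun.toMonoidHom f) = ρdiv (divC f))
    (d e : ℕ) (hd : 0 < d)
    (D₀ : Cpt →₀ ℤ) (hD₀eff : ∀ pt, 0 ≤ D₀ pt)
    (hD₀deg : D₀.sum (fun _ n => n) = (e : ℤ))
    -- the hypothesis `L(ρ*D₀) = ρ* L(D₀)`:
    (hRR : {h : FX | h = 0 ∨ ∃ u : FXˣ, (u : FX) = h ∧ ∀ pt, 0 ≤ (divX u + ρdiv D₀) pt}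
         = ρfun '' {h : FC | h = 0 ∨ ∃ u : FCˣ, (u : FC) = h ∧ ∀ pt, 0 ≤ (divC u + D₀) pt})
    (D : Xpt →₀ ℤ) (hDeff : ∀ pt, 0 ≤ D pt)
    (hDdeg : D.sum (fun _ n => n) = (d * e : ℕ))
    (hclass : ∃ f : FXˣ, D - ρdiv D₀ = divX f) :
    ∃ D' : Cpt →₀ ℤ, (∀ pt, 0 ≤ D' pt) ∧ D'.sum (fun _ n => n) = (e : ℤ) ∧
      D = ρdiv D' :=
  stmt5_general divX divC hdivC ρfun ρdiv hcompat e D₀ hD₀deg hRR D hDeff hclass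
end

section
/- Let p₁, p₂, p₃ be pairwise coprime prime powers and let P be a non-cuspidal point on X₀(p₁p₂p₃) defined over a number field of degree 4 whose image in X₀(p₁p₂p₃)* := X₀(p₁p₂p₃)/⟨w_{p₁}, w_{p₂}, w_{p₃}⟩ is a rational point. Then the elliptic curve corresponding to P is a ℚ-curve (isogenous over the algebraic closure to each of its Galois conjugates). -/
theorem Equivalence.rel_apply_cond {X β : Type*} {r : β → β → Prop} (hr : Equivalence r)
    {E : X → β} {w : X → X} (hw : ∀ Y, r (E Y) (E (w Y))) (ε : Bool) (Y : X) :
    r (E Y) (E (cond ε w id Y)) := by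
  cases ε
  · exact hr.refl _
  · exact hw Y

theorem stmt6_general {G X Ell : Type*} [Group G] [MulAction G X]
    (w₁ w₂ w₃ : X → X)
    (E : X → Ell)
    (isog : Ell → Ell → Prop) (hisog : Equivalence isog)
    -- Atkin–Lehner involutions move points to points with isogenous underlying curves:
    (hAL₁ : ∀ Y : X, isog (E Y) (E (w₁ Y)))
    (hAL₂ : ∀ Y : X, isog (E Y) (E (w₂ Y)))
    (hAL₃ : ∀ Y : X, isog (E Y) (E (w₃ Y)))
    (P : X)
    -- the image of `P` in `X₀(p₁p₂p₃)* = X₀(p₁p₂p₃)/⟨w₁,w₂,w₃⟩` is rational: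
    (hrat : ∀ g : G, ∃ ε₁ ε₂ ε₃ : Bool,
      g • P = (cond ε₁ w₁ id) ((cond ε₂ w₂ id) ((cond ε₃ w₃ id) P))) :
    -- `P` corresponds to a `ℚ`-curve:
    ∀ g : G, isog (E P) (E (g • P)) := by
  intro g
  obtain ⟨ε₁, ε₂, ε₃, hg⟩ := hrat g
  rw [hg]
  exact hisog.trans (hisog.rel_apply_cond hAL₃ ε₃ P)
    (hisog.trans (hisog.rel_apply_cond hAL₂ ε₂ _) (hisog.rel_apply_cond hAL₁ ε₁ _))

theorem stmt6 {G X Ell : Type*} [Group G] [MulAction G X]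
    (p₁ p₂ p₃ : ℕ) (hp₁ : IsPrimePow p₁) (hp₂ : IsPrimePow p₂) (hp₃ : IsPrimePow p₃)
    (hcop₁₂ : Nat.Coprime p₁ p₂) (hcop₁₃ : Nat.Coprime p₁ p₃) (hcop₂₃ : Nat.Coprime p₂ p₃)
    (w₁ w₂ w₃ : X → X)
    (hw₁ : Function.Involutive w₁) (hw₂ : Function.Involutive w₂)
    (hw₃ : Function.Involutive w₃)
    (hc₁₂ : Function.Commute w₁ w₂) (hc₁₃ : Function.Commute w₁ w₃)
    (hc₂₃ : Function.Commute w₂ w₃)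
    (hw₁G : ∀ (g : G) (x : X), w₁ (g • x) = g • w₁ x)
    (hw₂G : ∀ (g : G) (x : X), w₂ (g • x) = g • w₂ x)
    (hw₃G : ∀ (g : G) (x : X), w₃ (g • x) = g • w₃ x)
    (cusps : Set X)
    (E : X → Ell)
    (isog : Ell → Ell → Prop) (hisog : Equivalence isog)
    -- Atkin–Lehner involutions move points to points with isogenous underlying curves:
    (hAL₁ : ∀ Y : X, isog (E Y) (E (w₁ Y)))
    (hAL₂ : ∀ Y : X, isog (E Y) (E (w₂ Y)))
    (hAL₃ : ∀ Y : X, isog (E Y) (E (w₃ Y)))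
    (P : X) (hPnc : P ∉ cusps)
    -- `P` is a quartic point:
    (hPdeg : Nat.card (MulAction.orbit G P) = 4)
    -- the image of `P` in `X₀(p₁p₂p₃)* = X₀(p₁p₂p₃)/⟨w₁,w₂,w₃⟩` is rational:
    (hrat : ∀ g : G, ∃ ε₁ ε₂ ε₃ : Bool,
      g • P = (cond ε₁ w₁ id) ((cond ε₂ w₂ id) ((cond ε₃ w₃ id) P))) :
    -- `P` corresponds to a `ℚ`-curve:
    ∀ g : G, isog (E P) (E (g • P)) :=
  stmt6_general w₁ w₂ w₃ E isog hisog hAL₁ hAL₂ hAL₃ P hrat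
end
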